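/- Let E be a real m×n matrix of full column rank, l = (1/n)·E𝟙 the vector of row means, q ∈ ℝ^m a vector with Eᵀq = 𝟙, and let W₁,…,W_m be orthonormal eigenvectors of EEᵀ with eigenvalues ψ₁ ≥ … ≥ ψ_m ≥ 0. Write q = Σ_{j=1}^{m} α_j W_j with α₁ ≠ 0 and ψ₁ > 0. Then l = (1/n)·Σ_{j=1}^{m} α_j ψ_j W_j, and the sine of the angle between the line span{l} and the line span{W₁} is at most (ψ₂/ψ₁) · (sqrt(Σ_{j=2}^{m} α_j²))/|α₁|. -/

import Mathlib

/-!
Expanding `q = Σ αⱼ Wⱼ` in the eigenbasis gives `E𝟙 = E Eᵀ q = Σ αⱼ ψⱼ Wⱼ`, and `l` is a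
multiple of it, so `l` spans the same line. In the orthonormal coordinates of `Σ cⱼ Wⱼ` the
component orthogonal to `W₁` has norm `√(Σ_{j≥2} cⱼ²)`, while the whole vector has norm at least
`|c₁|`. With `cⱼ = αⱼ ψⱼ` and `|ψⱼ| ≤ ψ₂` for `j ≥ 2`, the sine is at most `ψ₂ √(Σ_{j≥2} αⱼ²)`
divided by `|α₁| ψ₁`.
-/

open Finset

/-- Euclidean inner product on `ℝ^m`. -/
noncomputable def ip {m : ℕ} (u v : Fin m → ℝ) : ℝ := ∑ i, u i * v i

/-- Euclidean norm on `ℝ^m`. -/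
noncomputable def enorm {m : ℕ} (v : Fin m → ℝ) : ℝ := Real.sqrt (∑ i, (v i) ^ 2)

open Matrix

/-- The sine of the angle between `span {v}` and `span {w}`, provided `w` is a unit vector. -/
noncomputable def sinAngle {m : ℕ} (v w : Fin m → ℝ) : ℝ :=
  _root_.enorm (v - ip v w • w) / _root_.enorm v

section Euclidean

variable {m : ℕ}

theorem ip_smul_left (s : ℝ) (u v : Fin m → ℝ) : ip (s • u) v = s * ip u v :=
  smul_dotProduct s u v

theorem ip_smul_right (s : ℝ) (u v : Fin m → ℝ) : ip u (s • v) = s * ip u v :=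
  dotProduct_smul s u v

theorem ip_sum_left {ι : Type*} (s : Finset ι) (u : ι → Fin m → ℝ) (v : Fin m → ℝ) :
    ip (∑ j ∈ s, u j) v = ∑ j ∈ s, ip (u j) v :=
  sum_dotProduct s u v

theorem ip_sum_right {ι : Type*} (s : Finset ι) (u : Fin m → ℝ) (v : ι → Fin m → ℝ) :
    ip u (∑ j ∈ s, v j) = ∑ j ∈ s, ip u (v j) :=
  dotProduct_sum u s v

theorem enorm_eq_sqrt_ip (v : Fin m → ℝ) : _root_.enorm v = √(ip v v) := by
  simp only [_root_.enorm, ip, sq]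

theorem enorm_smul_eq_abs_mul (s : ℝ) (v : Fin m → ℝ) :
    _root_.enorm (s • v) = |s| * _root_.enorm v := by
  rw [enorm_eq_sqrt_ip, enorm_eq_sqrt_ip, ip_smul_left, ip_smul_right, ← mul_assoc, ← sq,
    Real.sqrt_mul (sq_nonneg s), Real.sqrt_sq_eq_abs]

theorem sinAngle_nonneg (v w : Fin m → ℝ) : 0 ≤ sinAngle v w :=
  div_nonneg (Real.sqrt_nonneg _) (Real.sqrt_nonneg _)

theorem sinAngle_smul_le (s : ℝ) (v w : Fin m → ℝ) : sinAngle (s • v) w ≤ sinAngle v w := by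
  rcases eq_or_ne s 0 with rfl | hs
  · have hzero : _root_.enorm (0 : Fin m → ℝ) = 0 := by simp [_root_.enorm]
    rw [sinAngle, zero_smul, hzero, div_zero]
    exact sinAngle_nonneg v w
  · have hperp : s • v - ip (s • v) w • w = s • (v - ip v w • w) := by
      rw [ip_smul_left, smul_sub, smul_smul]
    rw [sinAngle, sinAngle, hperp, enorm_smul_eq_abs_mul, enorm_smul_eq_abs_mul,
      mul_div_mul_left _ _ (abs_ne_zero.2 hs)]

end Euclidean

section Orthonormal

variable {ι : Type*} [DecidableEq ι] {m : ℕ} {W : ι → Fin m → ℝ}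

theorem ip_sum_smul_left [Fintype ι] (hW : ∀ j k, ip (W j) (W k) = if j = k then 1 else 0)
    (c : ι → ℝ) (k : ι) : ip (∑ j, c j • W j) (W k) = c k := by
  simp [ip_sum_left, ip_smul_left, hW]

theorem enorm_sum_smul (hW : ∀ j k, ip (W j) (W k) = if j = k then 1 else 0)
    (s : Finset ι) (c : ι → ℝ) : _root_.enorm (∑ j ∈ s, c j • W j) = √(∑ j ∈ s, c j ^ 2) := by
  rw [enorm_eq_sqrt_ip]
  congr 1
  simp [ip_sum_left, ip_sum_right, ip_smul_left, ip_smul_right, hW, sq]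

theorem sinAngle_sum_smul_le [Fintype ι] (hW : ∀ j k, ip (W j) (W k) = if j = k then 1 else 0)
    (c : ι → ℝ) {k : ι} (hk : c k ≠ 0) :
    sinAngle (∑ j, c j • W j) (W k) ≤ √(∑ j ∈ univ \ {k}, c j ^ 2) / |c k| := by
  have hperp : ∑ j, c j • W j - c k • W k = ∑ j ∈ univ \ {k}, c j • W j := by
    rw [sum_eq_add_sum_sdiff_singleton_of_mem (mem_univ k), add_sub_cancel_left]
  have hnorm : |c k| ≤ _root_.enorm (∑ j, c j • W j) := by
    rw [enorm_sum_smul hW, ← Real.sqrt_sq_eq_abs]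
    exact Real.sqrt_le_sqrt (single_le_sum (fun j _ => sq_nonneg (c j)) (mem_univ k))
  rw [sinAngle, ip_sum_smul_left hW, hperp, enorm_sum_smul hW]
  exact div_le_div_of_nonneg_left (Real.sqrt_nonneg _) (abs_pos.2 hk) hnorm

end Orthonormal

theorem mulVec_sum_smul_of_eigen {ι n R : Type*} [Fintype n] [CommRing R]
    {M : Matrix n n R} {W : ι → n → R} {ψ : ι → R} (heig : ∀ j, M *ᵥ W j = ψ j • W j)
    (s : Finset ι) (α : ι → R) : M *ᵥ ∑ j ∈ s, α j • W j = ∑ j ∈ s, (α j * ψ j) • W j := by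
  simp [mulVec_sum, mulVec_smul, heig, smul_smul]

theorem sqrt_sum_sq_mul_le {ι : Type*} (s : Finset ι) (α ψ : ι → ℝ) {b : ℝ} (hb : 0 ≤ b)
    (hψ : ∀ j ∈ s, |ψ j| ≤ b) : √(∑ j ∈ s, (α j * ψ j) ^ 2) ≤ b * √(∑ j ∈ s, α j ^ 2) := by
  calc √(∑ j ∈ s, (α j * ψ j) ^ 2) ≤ √(∑ j ∈ s, b ^ 2 * α j ^ 2) := by
        refine Real.sqrt_le_sqrt (sum_le_sum fun j hj => ?_)
        rw [mul_pow, mul_comm]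
        exact mul_le_mul_of_nonneg_right (sq_le_sq.2 (by rw [abs_of_nonneg hb]; exact hψ j hj))
          (sq_nonneg _)
    _ = b * √(∑ j ∈ s, α j ^ 2) := by
        rw [← mul_sum, Real.sqrt_mul (sq_nonneg b), Real.sqrt_sq hb]

/-- For a full column rank matrix `E`, the row-mean vector `l = (1/n)E𝟙`, a vector `q` with
`Eᵀq = 𝟙`, and orthonormal eigenvectors `W` of `EEᵀ` with eigenvalues `ψ₁ ≥ … ≥ ψ_m ≥ 0`,
if `q = Σ α_j W_j` with `α₁ ≠ 0` and `ψ₁ > 0`, then `l = (1/n) Σ α_j ψ_j W_j`, and the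
sine of the angle between `span{l}` and `span{W₁}` (namely `‖l − ⟨l,W₁⟩W₁‖/‖l‖`, `W₁`
being a unit vector) is at most `(ψ₂/ψ₁) · sqrt(Σ_{j≥2} α_j²)/|α₁|`. -/
theorem statement8 (m n : ℕ) (hm : 2 ≤ m)
    (E : Matrix (Fin m) (Fin n) ℝ)
    (q : Fin m → ℝ) (hq1 : E.transpose.mulVec q = fun _ => 1)
    (W : Fin m → (Fin m → ℝ)) (ψ α : Fin m → ℝ)
    (hortho : ∀ j k, ip (W j) (W k) = if j = k then (1 : ℝ) else 0)
    (heig : ∀ j, (E * E.transpose).mulVec (W j) = ψ j • W j)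
    (hsorted : ∀ j k : Fin m, j ≤ k → ψ k ≤ ψ j)
    (hnonneg : ∀ j, 0 ≤ ψ j)
    (hq : q = fun i => ∑ j, α j * W j i)
    (hα : α ⟨0, by omega⟩ ≠ 0) (hψ : 0 < ψ ⟨0, by omega⟩)
    (l : Fin m → ℝ) (hl : l = (1 / (n : ℝ)) • E.mulVec (fun _ => 1)) :
    let j0 : Fin m := ⟨0, by omega⟩
    let j1 : Fin m := ⟨1, by omega⟩
    l = (fun i => (1 / (n : ℝ)) * ∑ j, α j * ψ j * W j i) ∧
    _root_.enorm (l - ip l (W j0) • W j0) / _root_.enorm l ≤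
      (ψ j1 / ψ j0) * (Real.sqrt (∑ j ∈ Finset.univ \ {j0}, (α j) ^ 2) / |α j0|) := by
  intro j0 j1
  have hq' : q = ∑ j, α j • W j := by
    ext i
    simp [hq, Finset.sum_apply]
  have hE1 : E *ᵥ (fun _ => 1) = ∑ j, (α j * ψ j) • W j := by
    rw [← hq1, mulVec_mulVec, hq', mulVec_sum_smul_of_eigen heig]
  have htail : ∀ j ∈ univ \ {j0}, |ψ j| ≤ ψ j1 := by
    intro j hj
    have hj0 : j.val ≠ 0 := fun h => (mem_sdiff.1 hj).2 (mem_singleton.2 (Fin.ext h))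
    rw [abs_of_nonneg (hnonneg j)]
    exact hsorted j1 j (Fin.mk_le_of_le_val (by omega))
  refine ⟨by ext i; simp [hl, hE1, Finset.sum_apply, mul_sum, mul_assoc], ?_⟩
  calc sinAngle l (W j0) ≤ sinAngle (E *ᵥ fun _ => 1) (W j0) := hl ▸ sinAngle_smul_le _ _ _
    _ ≤ √(∑ j ∈ univ \ {j0}, (α j * ψ j) ^ 2) / |α j0 * ψ j0| :=
        hE1 ▸ sinAngle_sum_smul_le hortho _ (mul_ne_zero hα hψ.ne')
    _ ≤ ψ j1 * √(∑ j ∈ univ \ {j0}, α j ^ 2) / |α j0 * ψ j0| := by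
        gcongr
        exact sqrt_sum_sq_mul_le _ α ψ (hnonneg j1) htail
    _ = (ψ j1 / ψ j0) * (√(∑ j ∈ univ \ {j0}, α j ^ 2) / |α j0|) := by
        rw [abs_mul, abs_of_pos hψ]
        ring
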